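/- The commutator coefficients evolve according to Γ(C_{m,k;i}) = −(∂_l A_m) ∇_A^i(∂_k u_l) − (∂_k u_l) C_{m,l;i} + 2ν C_{j,l;i} ∂_l(C_{m,k;j}). -/

import Mathlib

open scoped BigOperators

noncomputable section

/-- Spatial partial derivative `∂_i f` of a scalar function on `ℝ³`. -/
def pd (i : Fin 3) (f : (Fin 3 → ℝ) → ℝ) (x : Fin 3 → ℝ) : ℝ :=
  fderiv ℝ f x (Pi.single i 1)

/-- Spatial Laplacian `Δ f`. -/
def lap (f : (Fin 3 → ℝ) → ℝ) (x : Fin 3 → ℝ) : ℝ :=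
  ∑ i, pd i (fun y => pd i f y) x

/-- The operator `Γ_ν(u,∇) f = ∂_t f + u·∇f − ν Δf`. -/
def Gam (ν : ℝ) (u : (Fin 3 → ℝ) → ℝ → Fin 3 → ℝ)
    (f : (Fin 3 → ℝ) → ℝ → ℝ) (x : Fin 3 → ℝ) (t : ℝ) : ℝ :=
  deriv (fun s => f x s) t + ∑ j, u x t j * pd j (fun y => f y t) x
    - ν * lap (fun y => f y t) x

/-- The commutator coefficients `C_{m,k;i} = Q_{ji} ∂_j ∂_k A_m`. -/
def Ccoef (A : (Fin 3 → ℝ) → ℝ → Fin 3 → ℝ)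
    (Q : (Fin 3 → ℝ) → ℝ → Fin 3 → Fin 3 → ℝ)
    (m k i : Fin 3) (x : Fin 3 → ℝ) (t : ℝ) : ℝ :=
  ∑ j, Q x t j i * pd j (fun y => pd k (fun z => A z t m) y) x


abbrev E3 : Type := Fin 3 → ℝ

def Pf (f : E3 → ℝ → ℝ) : Prop := ContDiff ℝ (⊤ : ℕ∞) (fun p : E3 × ℝ => f p.1 p.2)

namespace Pf

variable {f g : E3 → ℝ → ℝ}

theorem hasFDerivAt_slice (hf : Pf f) (x : E3) (t : ℝ) :
    HasFDerivAt (fun y => f y t)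
      ((fderiv ℝ (fun p : E3 × ℝ => f p.1 p.2) (x, t)).comp
        ((ContinuousLinearMap.id ℝ E3).prod 0)) x := by
  have h1 : HasFDerivAt (fun p : E3 × ℝ => f p.1 p.2)
      (fderiv ℝ (fun p : E3 × ℝ => f p.1 p.2) (x, t)) (x, t) :=
    (hf.differentiable (by simp) (x, t)).hasFDerivAt
  have h2 : HasFDerivAt (fun y : E3 => (y, t))
      ((ContinuousLinearMap.id ℝ E3).prod 0) x :=
    HasFDerivAt.prodMk (hasFDerivAt_id x) (hasFDerivAt_const t x)
  exact h1.comp x h2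

theorem diffx (hf : Pf f) (x : E3) (t : ℝ) :
    DifferentiableAt ℝ (fun y => f y t) x :=
  (hf.hasFDerivAt_slice x t).differentiableAt

theorem pd_eq (hf : Pf f) (i : Fin 3) (x : E3) (t : ℝ) :
    pd i (fun y => f y t) x
      = fderiv ℝ (fun p : E3 × ℝ => f p.1 p.2) (x, t) (Pi.single i 1, 0) := by
  rw [pd, (hf.hasFDerivAt_slice x t).fderiv]
  rfl

theorem hasDerivAt_slice (hf : Pf f) (x : E3) (t : ℝ) :
    HasDerivAt (fun s => f x s)
      (fderiv ℝ (fun p : E3 × ℝ => f p.1 p.2) (x, t) (0, 1)) t := by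
  have h1 : HasFDerivAt (fun p : E3 × ℝ => f p.1 p.2)
      (fderiv ℝ (fun p : E3 × ℝ => f p.1 p.2) (x, t)) (x, t) :=
    (hf.differentiable (by simp) (x, t)).hasFDerivAt
  have h2 : HasDerivAt (fun s : ℝ => ((x, s) : E3 × ℝ)) ((0 : E3), (1:ℝ)) t :=
    HasDerivAt.prodMk (hasDerivAt_const t x) (hasDerivAt_id t)
  exact h1.comp_hasDerivAt t h2

theorem deriv_eq (hf : Pf f) (x : E3) (t : ℝ) :
    deriv (fun s => f x s) t
      = fderiv ℝ (fun p : E3 × ℝ => f p.1 p.2) (x, t) (0, 1) :=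
  (hf.hasDerivAt_slice x t).deriv

theorem pd' (hf : Pf f) (i : Fin 3) : Pf (fun y s => pd i (fun z => f z s) y) := by
  have : (fun p : E3 × ℝ => pd i (fun z => f z p.2) p.1)
      = fun p : E3 × ℝ =>
          fderiv ℝ (fun q : E3 × ℝ => f q.1 q.2) p (Pi.single i 1, 0) := by
    funext p
    exact hf.pd_eq i p.1 p.2
  unfold Pf
  rw [this]
  exact (hf.fderiv_right (by simp)).clm_apply contDiff_const

theorem dt' (hf : Pf f) : Pf (fun y s => deriv (fun r => f y r) s) := by
  have : (fun p : E3 × ℝ => deriv (fun r => f p.1 r) p.2)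
      = fun p : E3 × ℝ =>
          fderiv ℝ (fun q : E3 × ℝ => f q.1 q.2) p ((0 : E3), (1:ℝ)) := by
    funext p
    exact hf.deriv_eq p.1 p.2
  unfold Pf
  rw [this]
  exact (hf.fderiv_right (by simp)).clm_apply contDiff_const

theorem sym2full (hf : Pf f) (v w : E3 × ℝ) (p : E3 × ℝ) :
    fderiv ℝ (fun q => fderiv ℝ (fun r : E3 × ℝ => f r.1 r.2) q v) p w
      = fderiv ℝ (fun q => fderiv ℝ (fun r : E3 × ℝ => f r.1 r.2) q w) p v := by
  have hd : DifferentiableAt ℝ (fderiv ℝ (fun r : E3 × ℝ => f r.1 r.2)) p :=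
    ((hf.fderiv_right (m := (⊤ : ℕ∞)) (by simp)).differentiable (by simp)) p
  have e1 : ∀ v w : E3 × ℝ,
      fderiv ℝ (fun q => fderiv ℝ (fun r : E3 × ℝ => f r.1 r.2) q v) p w
        = fderiv ℝ (fderiv ℝ (fun r : E3 × ℝ => f r.1 r.2)) p w v := by
    intro v w
    rw [fderiv_clm_apply hd (differentiableAt_const v)]
    simp
  rw [e1, e1]
  exact (hf.contDiffAt.isSymmSndFDerivAt (by rw [minSmoothness_of_isRCLikeNormedField]; exact WithTop.coe_le_coe.mpr (le_top : (2 : ℕ∞) ≤ ⊤))).eq w v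

end Pf
-- generic pointwise rules
theorem pd_mul {f g : E3 → ℝ} {x : E3} (hf : DifferentiableAt ℝ f x)
    (hg : DifferentiableAt ℝ g x) (i : Fin 3) :
    pd i (fun y => f y * g y) x = f x * pd i g x + g x * pd i f x := by
  unfold pd
  rw [fderiv_fun_mul hf hg]
  simp

theorem pd_add {f g : E3 → ℝ} {x : E3} (hf : DifferentiableAt ℝ f x)
    (hg : DifferentiableAt ℝ g x) (i : Fin 3) :
    pd i (fun y => f y + g y) x = pd i f x + pd i g x := by
  unfold pd
  rw [fderiv_fun_add hf hg]
  simp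

theorem pd_sub {f g : E3 → ℝ} {x : E3} (hf : DifferentiableAt ℝ f x)
    (hg : DifferentiableAt ℝ g x) (i : Fin 3) :
    pd i (fun y => f y - g y) x = pd i f x - pd i g x := by
  unfold pd
  rw [fderiv_fun_sub hf hg]
  simp

theorem pd_const (c : ℝ) (x : E3) (i : Fin 3) :
    pd i (fun _ => c) x = 0 := by
  unfold pd
  rw [fderiv_fun_const]
  simp

theorem pd_const_mul {f : E3 → ℝ} {x : E3} (hf : DifferentiableAt ℝ f x)
    (c : ℝ) (i : Fin 3) :
    pd i (fun y => c * f y) x = c * pd i f x := by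
  unfold pd
  rw [fderiv_const_mul hf]
  simp

theorem pd_sum {ι : Type*} (s : Finset ι) {F : ι → E3 → ℝ} {x : E3}
    (hF : ∀ j ∈ s, DifferentiableAt ℝ (F j) x) (i : Fin 3) :
    pd i (fun y => ∑ j ∈ s, F j y) x = ∑ j ∈ s, pd i (F j) x := by
  unfold pd
  rw [fderiv_fun_sum hF]
  simp

theorem pd_neg {f : E3 → ℝ} {x : E3} (i : Fin 3) :
    pd i (fun y => -f y) x = -pd i f x := by
  unfold pd
  rw [fderiv_fun_neg]
  simp

namespace Pf

variable {f g : E3 → ℝ → ℝ}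

theorem pd_pd_eq (hf : Pf f) (i j : Fin 3) (x : E3) (t : ℝ) :
    pd i (fun y => pd j (fun z => f z t) y) x
      = fderiv ℝ (fun q : E3 × ℝ =>
          fderiv ℝ (fun r : E3 × ℝ => f r.1 r.2) q (Pi.single j 1, 0)) (x, t)
          (Pi.single i 1, 0) := by
  have h1 := (hf.pd' j).pd_eq i x t
  have h2 : (fun p : E3 × ℝ => pd j (fun z => f z p.2) p.1)
      = fun q : E3 × ℝ =>
          fderiv ℝ (fun r : E3 × ℝ => f r.1 r.2) q (Pi.single j 1, 0) :=
    funext fun p => hf.pd_eq j p.1 p.2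
  rw [← h2]
  exact h1

theorem dt_pd_eq (hf : Pf f) (k : Fin 3) (x : E3) (t : ℝ) :
    deriv (fun s => pd k (fun y => f y s) x) t
      = fderiv ℝ (fun q : E3 × ℝ =>
          fderiv ℝ (fun r : E3 × ℝ => f r.1 r.2) q (Pi.single k 1, 0)) (x, t)
          ((0 : E3), (1 : ℝ)) := by
  have h1 := (hf.pd' k).deriv_eq x t
  have h2 : (fun p : E3 × ℝ => pd k (fun z => f z p.2) p.1)
      = fun q : E3 × ℝ =>
          fderiv ℝ (fun r : E3 × ℝ => f r.1 r.2) q (Pi.single k 1, 0) :=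
    funext fun p => hf.pd_eq k p.1 p.2
  rw [← h2]
  exact h1

theorem pd_dt_eq (hf : Pf f) (k : Fin 3) (x : E3) (t : ℝ) :
    pd k (fun y => deriv (fun s => f y s) t) x
      = fderiv ℝ (fun q : E3 × ℝ =>
          fderiv ℝ (fun r : E3 × ℝ => f r.1 r.2) q ((0 : E3), (1 : ℝ))) (x, t)
          (Pi.single k 1, 0) := by
  have h1 := (hf.dt').pd_eq k x t
  have h2 : (fun p : E3 × ℝ => deriv (fun r => f p.1 r) p.2)
      = fun q : E3 × ℝ =>
          fderiv ℝ (fun r : E3 × ℝ => f r.1 r.2) q ((0 : E3), (1 : ℝ)) :=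
    funext fun p => hf.deriv_eq p.1 p.2
  rw [← h2]
  exact h1

/-- Clairaut: spatial partials commute. -/
theorem sympd (hf : Pf f) (i j : Fin 3) (x : E3) (t : ℝ) :
    pd i (fun y => pd j (fun z => f z t) y) x
      = pd j (fun y => pd i (fun z => f z t) y) x := by
  rw [hf.pd_pd_eq i j x t, hf.pd_pd_eq j i x t]
  exact hf.sym2full _ _ _

/-- time and space partials commute. -/
theorem dt_pd (hf : Pf f) (k : Fin 3) (x : E3) (t : ℝ) :
    deriv (fun s => pd k (fun y => f y s) x) t
      = pd k (fun y => deriv (fun s => f y s) t) x := by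
  rw [hf.dt_pd_eq k x t, hf.pd_dt_eq k x t]
  exact hf.sym2full _ _ _

theorem mul (hf : Pf f) (hg : Pf g) : Pf (fun y s => f y s * g y s) :=
  ContDiff.mul hf hg

theorem sum {ι : Type*} (s : Finset ι) {F : ι → E3 → ℝ → ℝ}
    (hF : ∀ j ∈ s, Pf (F j)) : Pf (fun y r => ∑ j ∈ s, F j y r) := by
  unfold Pf
  have : (fun p : E3 × ℝ => ∑ j ∈ s, F j p.1 p.2)
      = fun p : E3 × ℝ => ∑ j ∈ s, (fun q : E3 × ℝ => F j q.1 q.2) p := rfl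
  rw [this]
  exact ContDiff.sum hF

theorem proj3 {w : E3 → ℝ → E3}
    (h : ContDiff ℝ (⊤ : ℕ∞) (fun p : E3 × ℝ => w p.1 p.2)) (j : Fin 3) :
    Pf (fun y s => w y s j) :=
  (ContinuousLinearMap.proj (R := ℝ) (φ := fun _ : Fin 3 => ℝ) j).contDiff.comp h

theorem proj33 {w : E3 → ℝ → Fin 3 → Fin 3 → ℝ}
    (h : ContDiff ℝ (⊤ : ℕ∞) (fun p : E3 × ℝ => w p.1 p.2)) (j i : Fin 3) :
    Pf (fun y s => w y s j i) := by
  have h1 : ContDiff ℝ (⊤ : ℕ∞) (fun p : E3 × ℝ => w p.1 p.2 j) :=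
    (ContinuousLinearMap.proj (R := ℝ) (φ := fun _ : Fin 3 => Fin 3 → ℝ) j).contDiff.comp h
  exact (ContinuousLinearMap.proj (R := ℝ) (φ := fun _ : Fin 3 => ℝ) i).contDiff.comp h1

end Pf

section GamRules

variable {ν : ℝ} {u : E3 → ℝ → E3} (hu : ContDiff ℝ (⊤ : ℕ∞) (fun p : E3 × ℝ => u p.1 p.2))
variable {f g : E3 → ℝ → ℝ}

theorem lap_sum {ι : Type*} (s : Finset ι) {F : ι → E3 → ℝ → ℝ}
    (hF : ∀ j ∈ s, Pf (F j)) (x : E3) (t : ℝ) :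
    lap (fun y => ∑ j ∈ s, F j y t) x = ∑ j ∈ s, lap (fun y => F j y t) x := by
  unfold lap
  rw [Finset.sum_comm]
  refine Finset.sum_congr rfl fun i _ => ?_
  have h1 : (fun y => pd i (fun z => ∑ j ∈ s, F j z t) y)
      = fun y => ∑ j ∈ s, pd i (fun z => F j z t) y :=
    funext fun y => pd_sum s (fun j hj => (hF j hj).diffx y t) i
  rw [h1, pd_sum s (fun j hj => ((hF j hj).pd' i).diffx x t) i]

theorem lap_mul (hf : Pf f) (hg : Pf g) (x : E3) (t : ℝ) :
    lap (fun y => f y t * g y t) x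
      = f x t * lap (fun y => g y t) x + g x t * lap (fun y => f y t) x
        + 2 * ∑ i, pd i (fun y => f y t) x * pd i (fun y => g y t) x := by
  unfold lap
  have h1 : ∀ i : Fin 3, (fun y => pd i (fun z => f z t * g z t) y)
      = fun y => f y t * pd i (fun z => g z t) y + g y t * pd i (fun z => f z t) y :=
    fun i => funext fun y => pd_mul (hf.diffx y t) (hg.diffx y t) i
  have h2 : ∀ i : Fin 3,
      pd i (fun y => pd i (fun z => f z t * g z t) y) x
        = f x t * pd i (fun y => pd i (fun z => g z t) y) x
          + g x t * pd i (fun y => pd i (fun z => f z t) y) x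
          + 2 * (pd i (fun y => f y t) x * pd i (fun y => g y t) x) := by
    intro i
    rw [h1 i]
    rw [pd_add ((hf.diffx x t).fun_mul ((hg.pd' i).diffx x t))
      ((hg.diffx x t).fun_mul ((hf.pd' i).diffx x t)) i]
    rw [pd_mul (hf.diffx x t) ((hg.pd' i).diffx x t) i,
      pd_mul (hg.diffx x t) ((hf.pd' i).diffx x t) i]
    ring
  rw [Finset.sum_congr rfl fun i _ => h2 i]
  rw [Finset.sum_add_distrib, Finset.sum_add_distrib,
    ← Finset.mul_sum, ← Finset.mul_sum, ← Finset.mul_sum]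

theorem Gam_sum {ι : Type*} (s : Finset ι) {F : ι → E3 → ℝ → ℝ}
    (hF : ∀ j ∈ s, Pf (F j)) (x : E3) (t : ℝ) :
    Gam ν u (fun y r => ∑ j ∈ s, F j y r) x t = ∑ j ∈ s, Gam ν u (F j) x t := by
  unfold Gam
  beta_reduce
  have h1 : deriv (fun r => ∑ j ∈ s, F j x r) t = ∑ j ∈ s, deriv (fun r => F j x r) t := by
    rw [(HasDerivAt.fun_sum fun j hj => (hF j hj).hasDerivAt_slice x t).deriv]
    exact Finset.sum_congr rfl fun j hj => ((hF j hj).deriv_eq x t).symm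
  have h2 : ∀ j' : Fin 3, pd j' (fun y => ∑ j ∈ s, F j y t) x
      = ∑ j ∈ s, pd j' (fun y => F j y t) x :=
    fun j' => pd_sum s (fun j hj => (hF j hj).diffx x t) j'
  rw [h1, lap_sum s hF x t]
  have h3 : (∑ j' : Fin 3, u x t j' * pd j' (fun y => ∑ j ∈ s, F j y t) x)
      = ∑ j ∈ s, ∑ j' : Fin 3, u x t j' * pd j' (fun y => F j y t) x := by
    rw [Finset.sum_comm]
    refine Finset.sum_congr rfl fun j' _ => ?_
    rw [h2 j', Finset.mul_sum]
  rw [h3, Finset.mul_sum]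
  rw [Finset.sum_sub_distrib, Finset.sum_add_distrib]

theorem Gam_mul (hf : Pf f) (hg : Pf g) (x : E3) (t : ℝ) :
    Gam ν u (fun y r => f y r * g y r) x t
      = f x t * Gam ν u g x t + g x t * Gam ν u f x t
        - 2 * ν * ∑ i, pd i (fun y => f y t) x * pd i (fun y => g y t) x := by
  unfold Gam
  beta_reduce
  have h1 : deriv (fun r => f x r * g x r) t
      = f x t * deriv (fun r => g x r) t + g x t * deriv (fun r => f x r) t := by
    rw [((hf.hasDerivAt_slice x t).fun_mul (hg.hasDerivAt_slice x t)).deriv,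
      hf.deriv_eq x t, hg.deriv_eq x t]
    ring
  have h2 : ∀ j : Fin 3, pd j (fun y => f y t * g y t) x
      = f x t * pd j (fun y => g y t) x + g x t * pd j (fun y => f y t) x :=
    fun j => pd_mul (hf.diffx x t) (hg.diffx x t) j
  have h3 : (∑ j : Fin 3, u x t j * pd j (fun y => f y t * g y t) x)
      = f x t * ∑ j : Fin 3, u x t j * pd j (fun y => g y t) x
        + g x t * ∑ j : Fin 3, u x t j * pd j (fun y => f y t) x := by
    rw [Finset.mul_sum, Finset.mul_sum, ← Finset.sum_add_distrib]
    refine Finset.sum_congr rfl fun j _ => ?_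
    rw [h2 j]
    ring
  rw [h1, lap_mul hf hg x t, h3]
  ring

end GamRules

section Commute

variable {ν : ℝ} {u : E3 → ℝ → E3} {f : E3 → ℝ → ℝ}

theorem Gam_pd (hu : ContDiff ℝ (⊤ : ℕ∞) (fun p : E3 × ℝ => u p.1 p.2)) (hf : Pf f)
    (k : Fin 3) (x : E3) (t : ℝ) :
    Gam ν u (fun y s => pd k (fun z => f z s) y) x t
      = pd k (fun y => Gam ν u f y t) x
        - ∑ l, pd k (fun y => u y t l) x * pd l (fun y => f y t) x := by
  have hdS : ∀ y : E3, DifferentiableAt ℝ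
      (fun z => ∑ j : Fin 3, u z t j * pd j (fun w => f w t) z) y := by
    intro y
    exact DifferentiableAt.fun_sum fun j _ =>
      ((Pf.proj3 hu j).diffx y t).mul ((hf.pd' j).diffx y t)
  have hdL : ∀ y : E3, DifferentiableAt ℝ
      (fun z => ∑ i : Fin 3, pd i (fun w => pd i (fun v => f v t) w) z) y := by
    intro y
    exact DifferentiableAt.fun_sum fun i _ => (((hf.pd' i).pd' i)).diffx y t
  have hgam : (fun y => Gam ν u f y t)
      = fun y => (deriv (fun s => f y s) t
          + ∑ j : Fin 3, u y t j * pd j (fun w => f w t) y)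
          - ν * ∑ i : Fin 3, pd i (fun w => pd i (fun v => f v t) w) y := by
    funext y
    simp only [Gam, lap]
  -- expand pd k of Gam
  have s1 : pd k (fun y => Gam ν u f y t) x
      = pd k (fun y => deriv (fun s => f y s) t) x
        + pd k (fun y => ∑ j : Fin 3, u y t j * pd j (fun w => f w t) y) x
        - ν * pd k (fun y => ∑ i : Fin 3, pd i (fun w => pd i (fun v => f v t) w) y) x := by
    rw [hgam]
    rw [pd_sub (((hf.dt').diffx x t).fun_add (hdS x))
      ((differentiableAt_const ν).fun_mul (hdL x)) k]
    rw [pd_add ((hf.dt').diffx x t) (hdS x) k]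
    rw [pd_const_mul (hdL x) ν k]
  have s2 : pd k (fun y => deriv (fun s => f y s) t) x
      = deriv (fun s => pd k (fun z => f z s) x) t := (hf.dt_pd k x t).symm
  have s3 : pd k (fun y => ∑ j : Fin 3, u y t j * pd j (fun w => f w t) y) x
      = (∑ j : Fin 3, u x t j * pd j (fun y => pd k (fun z => f z t) y) x)
        + ∑ l : Fin 3, pd k (fun y => u y t l) x * pd l (fun y => f y t) x := by
    rw [pd_sum Finset.univ (fun j _ =>
      ((Pf.proj3 hu j).diffx x t).fun_mul ((hf.pd' j).diffx x t)) k]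
    rw [← Finset.sum_add_distrib]
    refine Finset.sum_congr rfl fun j _ => ?_
    rw [pd_mul ((Pf.proj3 hu j).diffx x t) ((hf.pd' j).diffx x t) k]
    rw [hf.sympd k j x t]
    ring
  have s4 : pd k (fun y => ∑ i : Fin 3, pd i (fun w => pd i (fun v => f v t) w) y) x
      = ∑ i : Fin 3, pd i (fun y => pd i (fun z => pd k (fun w => f w t) z) y) x := by
    rw [pd_sum Finset.univ (fun i _ => (((hf.pd' i).pd' i)).diffx x t) k]
    refine Finset.sum_congr rfl fun i _ => ?_
    rw [(hf.pd' i).sympd k i x t]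
    have e : (fun y => pd k (fun z => pd i (fun v => f v t) z) y)
        = fun y => pd i (fun z => pd k (fun v => f v t) z) y :=
      funext fun y => hf.sympd k i y t
    rw [e]
  rw [s1, s2, s3, s4]
  simp only [Gam, lap]
  beta_reduce
  ring

end Commute

theorem Gam_const {ν : ℝ} {u : E3 → ℝ → E3} (c : ℝ) (x : E3) (t : ℝ) :
    Gam ν u (fun _ _ => c) x t = 0 := by
  have h2 : ∀ i : Fin 3, pd i (fun y => pd i (fun _ : E3 => c) y) x = 0 := by
    intro i
    have e : (fun y : E3 => pd i (fun _ : E3 => c) y) = fun _ => (0:ℝ) :=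
      funext fun y => pd_const c y i
    rw [e]
    exact pd_const 0 x i
  simp [Gam, lap, pd_const, h2]

theorem inv_solve (a1 qm : Fin 3 → Fin 3 → ℝ) (g R : Fin 3 → ℝ)
    (star : ∀ p, ∑ j, a1 j p * g j = R p)
    (h2 : ∀ j b, ∑ p, a1 j p * qm b p = if j = b then (1:ℝ) else 0) :
    ∀ b, g b = ∑ p, qm b p * R p := by
  intro b
  have c1 : g b = ∑ j, g j * (if j = b then (1:ℝ) else 0) := by
    simp [mul_ite, Finset.sum_ite_eq']
  rw [c1]
  have c2 : ∀ j : Fin 3, g j * (if j = b then (1:ℝ) else 0)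
      = ∑ p, g j * (a1 j p * qm b p) := by
    intro j
    rw [← Finset.mul_sum, h2 j b]
  rw [Finset.sum_congr rfl fun j _ => c2 j, Finset.sum_comm]
  refine Finset.sum_congr rfl fun p _ => ?_
  rw [← star p, Finset.mul_sum]
  refine Finset.sum_congr rfl fun j _ => ?_
  ring


set_option maxHeartbeats 4000000 in
theorem algA (i : Fin 3)
    (q : Fin 3 → Fin 3 → ℝ) (dq : Fin 3 → Fin 3 → Fin 3 → ℝ)
    (a2 : Fin 3 → Fin 3 → Fin 3 → ℝ) (a3 : Fin 3 → Fin 3 → ℝ)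
    (hdq : ∀ l b e, dq l b e = -∑ r, ∑ s, q r e * a2 l r s * q b s)
    (hsym : ∀ p c r, a2 p c r = a2 c p r) :
    -∑ j, ∑ a, dq a j i * a3 a j
      = ∑ j, ∑ l, (∑ b, q b i * a2 b l j) * (∑ p, q p j * a3 l p) := by
  have h10 : ∀ r, a2 1 0 r = a2 0 1 r := fun r => hsym 1 0 r
  have h20 : ∀ r, a2 2 0 r = a2 0 2 r := fun r => hsym 2 0 r
  have h21 : ∀ r, a2 2 1 r = a2 1 2 r := fun r => hsym 2 1 r
  have hdq0 : ∀ b e, dq 0 b e =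
      -(q 0 e * a2 0 0 0 * q b 0 + q 0 e * a2 0 0 1 * q b 1 + q 0 e * a2 0 0 2 * q b 2 + q 1 e * a2 0 1 0 * q b 0 + q 1 e * a2 0 1 1 * q b 1 + q 1 e * a2 0 1 2 * q b 2 + q 2 e * a2 0 2 0 * q b 0 + q 2 e * a2 0 2 1 * q b 1 + q 2 e * a2 0 2 2 * q b 2) := by
    intro b e
    rw [hdq 0 b e]
    simp only [Fin.sum_univ_three]
    first
    | simp only [h10, h20, h21]
    | skip
    ring
  have hdq1 : ∀ b e, dq 1 b e =
      -(q 0 e * a2 0 1 0 * q b 0 + q 0 e * a2 0 1 1 * q b 1 + q 0 e * a2 0 1 2 * q b 2 + q 1 e * a2 1 1 0 * q b 0 + q 1 e * a2 1 1 1 * q b 1 + q 1 e * a2 1 1 2 * q b 2 + q 2 e * a2 1 2 0 * q b 0 + q 2 e * a2 1 2 1 * q b 1 + q 2 e * a2 1 2 2 * q b 2) := by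
    intro b e
    rw [hdq 1 b e]
    simp only [Fin.sum_univ_three]
    first
    | simp only [h10, h20, h21]
    | skip
    ring
  have hdq2 : ∀ b e, dq 2 b e =
      -(q 0 e * a2 0 2 0 * q b 0 + q 0 e * a2 0 2 1 * q b 1 + q 0 e * a2 0 2 2 * q b 2 + q 1 e * a2 1 2 0 * q b 0 + q 1 e * a2 1 2 1 * q b 1 + q 1 e * a2 1 2 2 * q b 2 + q 2 e * a2 2 2 0 * q b 0 + q 2 e * a2 2 2 1 * q b 1 + q 2 e * a2 2 2 2 * q b 2) := by
    intro b e
    rw [hdq 2 b e]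
    simp only [Fin.sum_univ_three]
    first
    | simp only [h10, h20, h21]
    | skip
    ring
  simp only [Fin.sum_univ_three]
  simp only [h10, h20, h21]
  simp only [hdq0, hdq1, hdq2]
  ring

set_option maxHeartbeats 10000000 in
theorem algB (m k i : Fin 3)
    (q : Fin 3 → Fin 3 → ℝ) (dq : Fin 3 → Fin 3 → Fin 3 → ℝ)
    (a2 : Fin 3 → Fin 3 → Fin 3 → ℝ)
    (hdq : ∀ l b e, dq l b e = -∑ r, ∑ s, q r e * a2 l r s * q b s)
    (hsym : ∀ p c r, a2 p c r = a2 c p r) :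
    ∑ j, a2 j k m * ∑ p, q j p * ∑ c, ∑ a, dq c a i * a2 c a p
      = ∑ j, ∑ l, (∑ b, q b i * a2 b l j) * (∑ p, a2 p k m * dq l p j) := by
  have h10 : ∀ r, a2 1 0 r = a2 0 1 r := fun r => hsym 1 0 r
  have h20 : ∀ r, a2 2 0 r = a2 0 2 r := fun r => hsym 2 0 r
  have h21 : ∀ r, a2 2 1 r = a2 1 2 r := fun r => hsym 2 1 r
  have hdq0 : ∀ b e, dq 0 b e =
      -(q 0 e * a2 0 0 0 * q b 0 + q 0 e * a2 0 0 1 * q b 1 + q 0 e * a2 0 0 2 * q b 2 + q 1 e * a2 0 1 0 * q b 0 + q 1 e * a2 0 1 1 * q b 1 + q 1 e * a2 0 1 2 * q b 2 + q 2 e * a2 0 2 0 * q b 0 + q 2 e * a2 0 2 1 * q b 1 + q 2 e * a2 0 2 2 * q b 2) := by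
    intro b e
    rw [hdq 0 b e]
    simp only [Fin.sum_univ_three]
    first
    | simp only [h10, h20, h21]
    | skip
    ring
  have hdq1 : ∀ b e, dq 1 b e =
      -(q 0 e * a2 0 1 0 * q b 0 + q 0 e * a2 0 1 1 * q b 1 + q 0 e * a2 0 1 2 * q b 2 + q 1 e * a2 1 1 0 * q b 0 + q 1 e * a2 1 1 1 * q b 1 + q 1 e * a2 1 1 2 * q b 2 + q 2 e * a2 1 2 0 * q b 0 + q 2 e * a2 1 2 1 * q b 1 + q 2 e * a2 1 2 2 * q b 2) := by
    intro b e
    rw [hdq 1 b e]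
    simp only [Fin.sum_univ_three]
    first
    | simp only [h10, h20, h21]
    | skip
    ring
  have hdq2 : ∀ b e, dq 2 b e =
      -(q 0 e * a2 0 2 0 * q b 0 + q 0 e * a2 0 2 1 * q b 1 + q 0 e * a2 0 2 2 * q b 2 + q 1 e * a2 1 2 0 * q b 0 + q 1 e * a2 1 2 1 * q b 1 + q 1 e * a2 1 2 2 * q b 2 + q 2 e * a2 2 2 0 * q b 0 + q 2 e * a2 2 2 1 * q b 1 + q 2 e * a2 2 2 2 * q b 2) := by
    intro b e
    rw [hdq 2 b e]
    simp only [Fin.sum_univ_three]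
    first
    | simp only [h10, h20, h21]
    | skip
    ring
  simp only [Fin.sum_univ_three]
  simp only [h10, h20, h21]
  simp only [hdq0, hdq1, hdq2]
  ring

set_option maxHeartbeats 4000000 in
theorem algC (m k i : Fin 3)
    (q : Fin 3 → Fin 3 → ℝ) (a1 : Fin 3 → Fin 3 → ℝ)
    (a2 : Fin 3 → Fin 3 → Fin 3 → ℝ)
    (w1 : Fin 3 → Fin 3 → ℝ) (w2 : Fin 3 → Fin 3 → ℝ) :
    ∑ j, (q j i * (-(∑ l, (w1 k l * a2 j l m + a1 l m * w2 j l))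
            - ∑ l, w1 j l * a2 l k m)
          + a2 j k m * ∑ c, q c i * w1 c j)
      = -(∑ l, a1 l m * ∑ j, q j i * w2 j l)
        - ∑ l, w1 k l * ∑ j, q j i * a2 j l m := by
  simp only [Fin.sum_univ_three]
  ring

set_option maxHeartbeats 4000000 in
theorem alg_core (ν : ℝ) (m k i : Fin 3)
    (q : Fin 3 → Fin 3 → ℝ) (dq : Fin 3 → Fin 3 → Fin 3 → ℝ)
    (a1 : Fin 3 → Fin 3 → ℝ) (a2 : Fin 3 → Fin 3 → Fin 3 → ℝ)
    (a3 : Fin 3 → Fin 3 → ℝ) (w1 : Fin 3 → Fin 3 → ℝ) (w2 : Fin 3 → Fin 3 → ℝ)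
    (hdq : ∀ l b e, dq l b e = -∑ r, ∑ s, q r e * a2 l r s * q b s)
    (hsym : ∀ p c r, a2 p c r = a2 c p r) :
    ∑ j, (q j i * (-(∑ l, (w1 k l * a2 j l m + a1 l m * w2 j l))
            - ∑ l, w1 j l * a2 l k m)
          + a2 j k m * ((∑ c, q c i * w1 c j)
            + 2 * ν * ∑ p, q j p * ∑ c, ∑ a, dq c a i * a2 c a p)
          - 2 * ν * ∑ a, dq a j i * a3 a j)
      = -(∑ l, a1 l m * ∑ j, q j i * w2 j l)
        - ∑ l, w1 k l * ∑ j, q j i * a2 j l m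
        + 2 * ν * ∑ j, ∑ l,
            ((∑ b, q b i * a2 b l j) * (∑ p, (q p j * a3 l p + a2 p k m * dq l p j))) := by
  have hA := algA i q dq a2 a3 hdq hsym
  have hB := algB m k i q dq a2 hdq hsym
  have hC := algC m k i q a1 a2 w1 w2
  simp only [Fin.sum_univ_three] at hA hB hC ⊢
  linear_combination hC + (2 * ν) * hA + (2 * ν) * hB

set_option maxHeartbeats 2000000 in
/-- The commutator coefficients evolve by
`Γ(C_{m,k;i}) = −(∂_l A_m) ∇_A^i(∂_k u_l) − (∂_k u_l) C_{m,l;i} + 2ν C_{j,l;i} ∂_l(C_{m,k;j})`. -/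
theorem Ccoef_evolution (ν : ℝ) (hν : 0 < ν)
    (u : (Fin 3 → ℝ) → ℝ → Fin 3 → ℝ)
    (hu : ContDiff ℝ (⊤ : ℕ∞) (fun p : (Fin 3 → ℝ) × ℝ => u p.1 p.2))
    (hdiv : ∀ (x : Fin 3 → ℝ) (t : ℝ), ∑ j, pd j (fun y => u y t j) x = 0)
    (A : (Fin 3 → ℝ) → ℝ → Fin 3 → ℝ)
    (hA : ContDiff ℝ (⊤ : ℕ∞) (fun p : (Fin 3 → ℝ) × ℝ => A p.1 p.2))
    (hAeq : ∀ (x : Fin 3 → ℝ) (t : ℝ) (m : Fin 3),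
      Gam ν u (fun y s => A y s m) x t = 0)
    (Q : (Fin 3 → ℝ) → ℝ → Fin 3 → Fin 3 → ℝ)
    (hQ : ContDiff ℝ (⊤ : ℕ∞) (fun p : (Fin 3 → ℝ) × ℝ => Q p.1 p.2))
    (hQ1 : ∀ (x : Fin 3 → ℝ) (t : ℝ) (m p : Fin 3),
      ∑ j, Q x t j m * pd j (fun y => A y t p) x = if m = p then (1:ℝ) else 0)
    (hQ2 : ∀ (x : Fin 3 → ℝ) (t : ℝ) (m p : Fin 3),
      ∑ j, pd m (fun y => A y t j) x * Q x t p j = if m = p then (1:ℝ) else 0)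
    (hQeq : ∀ (x : Fin 3 → ℝ) (t : ℝ) (j i : Fin 3),
      Gam ν u (fun y s => Q y s j i) x t
        = (∑ k, pd k (fun y => u y t j) x * Q x t k i)
          + 2 * ν * ∑ k, ∑ a, ∑ b,
              Q x t j a * pd k (fun y => pd a (fun z => A z t b) y) x
                * pd k (fun y => Q y t b i) x) :
    ∀ (x : Fin 3 → ℝ) (t : ℝ) (m k i : Fin 3),
      Gam ν u (fun y s => Ccoef A Q m k i y s) x t =
        - (∑ l, pd l (fun y => A y t m) x
            * (∑ j, Q x t j i * pd j (fun y => pd k (fun z => u z t l) y) x))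
        - (∑ l, pd k (fun y => u y t l) x * Ccoef A Q m l i x t)
        + 2 * ν * ∑ j, ∑ l,
            Ccoef A Q j l i x t * pd l (fun y => Ccoef A Q m k j y t) x := by
  intro x t m k i
  have PA : ∀ r, Pf (fun y s => A y s r) := fun r => Pf.proj3 hA r
  have PU : ∀ r, Pf (fun y s => u y s r) := fun r => Pf.proj3 hu r
  have PQ : ∀ b e, Pf (fun y s => Q y s b e) := fun b e => Pf.proj33 hQ b e
  have PAc : ∀ r c, Pf (fun y s => pd c (fun z => A z s r) y) := fun r c => (PA r).pd' c
  have PB : ∀ j : Fin 3, Pf (fun y s => pd j (fun z => pd k (fun w => A w s m) z) y) :=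
    fun j => (PAc m k).pd' j
  have hGA : ∀ (r c : Fin 3) (y : E3),
      Gam ν u (fun z s => pd c (fun w => A w s r) z) y t
        = -∑ l, pd c (fun z => u z t l) y * pd l (fun z => A z t r) y := by
    intro r c y
    rw [Gam_pd hu (PA r) c y t]
    have e0 : (fun z => Gam ν u (fun w s => A w s r) z t) = fun _ : E3 => (0:ℝ) :=
      funext fun z => hAeq z t r
    rw [e0, pd_const, zero_sub]
  have hGB : ∀ j : Fin 3,
      Gam ν u (fun y s => pd j (fun z => pd k (fun w => A w s m) z) y) x t
        = -(∑ l, (pd k (fun y => u y t l) x * pd j (fun y => pd l (fun z => A z t m) y) x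
              + pd l (fun y => A y t m) x * pd j (fun y => pd k (fun z => u z t l) y) x))
          - ∑ l, pd j (fun y => u y t l) x * pd l (fun y => pd k (fun z => A z t m) y) x := by
    intro j
    rw [Gam_pd hu (PAc m k) j x t]
    have e1 : (fun y => Gam ν u (fun z s => pd k (fun w => A w s m) z) y t)
        = fun y => -∑ l, pd k (fun z => u z t l) y * pd l (fun z => A z t m) y :=
      funext fun y => hGA m k y
    rw [e1, pd_neg]
    rw [pd_sum Finset.univ (fun l _ =>
      (((PU l).pd' k).diffx x t).fun_mul ((PAc m l).diffx x t)) j]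
    have e2 : ∀ l : Fin 3,
        pd j (fun y => pd k (fun z => u z t l) y * pd l (fun z => A z t m) y) x
          = pd k (fun y => u y t l) x * pd j (fun y => pd l (fun z => A z t m) y) x
            + pd l (fun y => A y t m) x * pd j (fun y => pd k (fun z => u z t l) y) x :=
      fun l => pd_mul (((PU l).pd' k).diffx x t) ((PAc m l).diffx x t) j
    rw [Finset.sum_congr rfl fun l _ => e2 l]
  have hq2' : ∀ j b : Fin 3, ∑ p, pd j (fun y => A y t p) x * Q x t b p
      = if j = b then (1:ℝ) else 0 := fun j b => hQ2 x t j b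
  have hdqfact : ∀ l b e : Fin 3, pd l (fun y => Q y t b e) x
      = -∑ r, ∑ s, Q x t r e
          * pd l (fun y => pd r (fun z => A z t s) y) x * Q x t b s := by
    intro l b e
    have hstar : ∀ p, ∑ j, pd j (fun y => A y t p) x * pd l (fun y => Q y t j e) x
        = -∑ j, Q x t j e * pd l (fun y => pd j (fun z => A z t p) y) x := by
      intro p
      have h0 : pd l (fun y => ∑ j, Q y t j e * pd j (fun z => A z t p) y) x = 0 := by
        have e0 : (fun y => ∑ j, Q y t j e * pd j (fun z => A z t p) y)
            = fun _ : E3 => (if e = p then (1:ℝ) else 0) :=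
          funext fun y => hQ1 y t e p
        rw [e0]
        exact pd_const _ x l
      rw [pd_sum Finset.univ (fun j _ =>
        ((PQ j e).diffx x t).fun_mul (((PA p).pd' j).diffx x t)) l] at h0
      have e1 : ∀ j : Fin 3,
          pd l (fun y => Q y t j e * pd j (fun z => A z t p) y) x
            = Q x t j e * pd l (fun y => pd j (fun z => A z t p) y) x
              + pd j (fun y => A y t p) x * pd l (fun y => Q y t j e) x :=
        fun j => pd_mul ((PQ j e).diffx x t) (((PA p).pd' j).diffx x t) l
      rw [Finset.sum_congr rfl fun j _ => e1 j] at h0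
      simp only [Fin.sum_univ_three] at h0 ⊢
      linear_combination h0
    have hmain := inv_solve (fun j p => pd j (fun y => A y t p) x) (fun b p => Q x t b p)
      (fun j => pd l (fun y => Q y t j e) x)
      (fun p => -∑ j, Q x t j e * pd l (fun y => pd j (fun z => A z t p) y) x)
      hstar hq2' b
    rw [hmain]
    simp only [Fin.sum_univ_three]
    ring
  have hGQ : ∀ b : Fin 3, Gam ν u (fun y s => Q y s b i) x t
      = (∑ c, Q x t c i * pd c (fun y => u y t b) x)
        + 2 * ν * ∑ p, Q x t b p * ∑ c, ∑ a,
            pd c (fun y => Q y t a i) x * pd c (fun y => pd a (fun z => A z t p) y) x := by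
    intro b
    have hstarG : ∀ p, ∑ j, pd j (fun y => A y t p) x * Gam ν u (fun y s => Q y s j i) x t
        = (∑ j, Q x t j i * ∑ l, pd j (fun y => u y t l) x * pd l (fun y => A y t p) x)
          + 2 * ν * ∑ j, ∑ a, pd a (fun y => Q y t j i) x
              * pd a (fun y => pd j (fun z => A z t p) y) x := by
      intro p
      have h0 : Gam ν u (fun y s => ∑ j, Q y s j i * pd j (fun z => A z s p) y) x t = 0 := by
        have e0 : (fun y s => ∑ j, Q y s j i * pd j (fun z => A z s p) y)
            = fun _ _ => (if i = p then (1:ℝ) else 0) :=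
          funext fun y => funext fun s => hQ1 y s i p
        rw [e0]
        exact Gam_const _ x t
      rw [Gam_sum Finset.univ (fun j _ => (PQ j i).mul ((PA p).pd' j)) x t] at h0
      have e1 : ∀ j : Fin 3,
          Gam ν u (fun y s => Q y s j i * pd j (fun z => A z s p) y) x t
            = Q x t j i * (-∑ l, pd j (fun y => u y t l) x * pd l (fun y => A y t p) x)
              + pd j (fun y => A y t p) x * Gam ν u (fun y s => Q y s j i) x t
              - 2 * ν * ∑ a, pd a (fun y => Q y t j i) x
                  * pd a (fun y => pd j (fun z => A z t p) y) x := by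
        intro j
        rw [Gam_mul (PQ j i) ((PA p).pd' j) x t, hGA p j x]
      rw [Finset.sum_congr rfl fun j _ => e1 j] at h0
      simp only [Fin.sum_univ_three] at h0 ⊢
      linear_combination h0
    have hmain := inv_solve (fun j p => pd j (fun y => A y t p) x) (fun b p => Q x t b p)
      (fun j => Gam ν u (fun y s => Q y s j i) x t)
      (fun p => (∑ j, Q x t j i * ∑ l, pd j (fun y => u y t l) x * pd l (fun y => A y t p) x)
        + 2 * ν * ∑ j, ∑ a, pd a (fun y => Q y t j i) x
            * pd a (fun y => pd j (fun z => A z t p) y) x)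
      hstarG hq2' b
    have hW := inv_solve (fun j p => pd j (fun y => A y t p) x) (fun b p => Q x t b p)
      (fun l => ∑ j, Q x t j i * pd j (fun y => u y t l) x)
      (fun p => ∑ j, Q x t j i * ∑ l, pd j (fun y => u y t l) x * pd l (fun y => A y t p) x)
      (fun p => by simp only [Fin.sum_univ_three]; ring) hq2' b
    rw [hmain]
    simp only [Fin.sum_univ_three] at hW ⊢
    linear_combination -hW
  have L2 : ∀ j : Fin 3,
      Gam ν u (fun y s => Q y s j i * pd j (fun z => pd k (fun w => A w s m) z) y) x t
        = Q x t j i * (-(∑ l, (pd k (fun y => u y t l) x * pd j (fun y => pd l (fun z => A z t m) y) x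
              + pd l (fun y => A y t m) x * pd j (fun y => pd k (fun z => u z t l) y) x))
            - ∑ l, pd j (fun y => u y t l) x * pd l (fun y => pd k (fun z => A z t m) y) x)
          + pd j (fun y => pd k (fun z => A z t m) y) x
            * ((∑ c, Q x t c i * pd c (fun y => u y t j) x)
              + 2 * ν * ∑ p, Q x t j p * ∑ c, ∑ a,
                  pd c (fun y => Q y t a i) x * pd c (fun y => pd a (fun z => A z t p) y) x)
          - 2 * ν * ∑ a, pd a (fun y => Q y t j i) x
              * pd a (fun y => pd j (fun z => pd k (fun w => A w t m) z) y) x := by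
    intro j
    rw [Gam_mul (PQ j i) (PB j) x t, hGB j, hGQ j]
  have hpdC : ∀ (j l : Fin 3),
      pd l (fun y => ∑ p, Q y t p j * pd p (fun y' => pd k (fun z => A z t m) y') y) x
        = ∑ p, (Q x t p j * pd l (fun y => pd p (fun y' => pd k (fun z => A z t m) y') y) x
            + pd p (fun y => pd k (fun z => A z t m) y) x * pd l (fun y => Q y t p j) x) := by
    intro j l
    rw [pd_sum Finset.univ (fun p _ => ((PQ p j).diffx x t).fun_mul ((PB p).diffx x t)) l]
    exact Finset.sum_congr rfl fun p _ => pd_mul ((PQ p j).diffx x t) ((PB p).diffx x t) l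
  simp only [Ccoef]
  rw [Gam_sum Finset.univ (fun j _ => (PQ j i).mul (PB j)) x t]
  rw [Finset.sum_congr rfl fun j _ => L2 j]
  simp only [hpdC]
  exact alg_core ν m k i (fun b e => Q x t b e)
    (fun l b e => pd l (fun y => Q y t b e) x)
    (fun l r => pd l (fun y => A y t r) x)
    (fun p c r => pd p (fun y => pd c (fun z => A z t r) y) x)
    (fun l p => pd l (fun y => pd p (fun z => pd k (fun w => A w t m) z) y) x)
    (fun c l => pd c (fun y => u y t l) x)
    (fun j l => pd j (fun y => pd k (fun z => u z t l) y) x)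
    hdqfact (fun p c r => (PA r).sympd p c x t)
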